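/- arXiv:0908.1027 — 2 statements merged into one kernel-verified Lean document; each statement's English description precedes it below -/
import Mathlib

section
/- Let q be a prime power, ψ a nontrivial additive character of F_q, g ∈ F_q^× an element of multiplicative order s, and a ∈ F_q^×. Then |Σ_{x=0}^{s-1} ψ(a·g^x)| ≤ √q. -/
/-! For a finite subgroup `H` of units and `S(b) = ∑_{h ∈ H} ψ(b h)`, orthogonality of the
characters `x ↦ ψ(x (h - h'))` gives the second moment `∑_b |S(b)|² = q |H|`. Since `S` is
constant on the coset `aH`, the `|H|` terms with `b ∈ aH` alone contribute `|H| |S(a)|²`,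
whence `|S(a)|² ≤ q`. A sum over `x < ord g` of `ψ(a gˣ)` is such a sum with `H = ⟨g⟩`. -/

open Finset

theorem IsOfFinOrder.sum_range_orderOf_eq_sum_zpowers {G M : Type*} [Group G] [AddCommMonoid M]
    {g : G} (hg : IsOfFinOrder g) [Fintype (Subgroup.zpowers g)] (f : G → M) :
    ∑ x ∈ range (orderOf g), f (g ^ x) = ∑ h : Subgroup.zpowers g, f h := by
  rw [sum_range fun x => f (g ^ x)]
  exact Fintype.sum_equiv (finEquivZPowers hg) _ _ fun _ => rfl

namespace AddChar

variable {R : Type*} [CommRing R] [Fintype R] {ψ : AddChar R ℂ}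

theorem sum_norm_sq_sum_mul_eq (hψ : ψ.IsPrimitive) {ι : Type*} [Fintype ι] {f : ι → R}
    (hf : Function.Injective f) :
    ∑ b, ‖∑ i, ψ (b * f i)‖ ^ 2 = Fintype.card R * Fintype.card ι := by
  classical
  have orthogonality (i j : ι) :
      ∑ b, ψ (b * (f i - f j)) = if i = j then (Fintype.card R : ℂ) else 0 := by
    simp only [sum_mulShift _ hψ, sub_eq_zero, hf.eq_iff]
    push_cast; rfl
  have expand (b : R) : (‖∑ i, ψ (b * f i)‖ ^ 2 : ℂ) = ∑ i, ∑ j, ψ (b * (f i - f j)) := by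
    rw [← Complex.mul_conj', map_sum, sum_mul_sum]
    refine sum_congr rfl fun i _ => sum_congr rfl fun j _ => ?_
    rw [← map_neg_eq_conj, ← map_add_eq_mul, mul_sub, sub_eq_add_neg]
  have : (∑ b, ‖∑ i, ψ (b * f i)‖ ^ 2 : ℂ) = Fintype.card R * Fintype.card ι := by
    simp_rw [expand]
    rw [sum_comm]
    simp_rw [sum_comm (s := univ (α := R)), orthogonality]
    simp [mul_comm]
  exact_mod_cast this

theorem norm_sum_mul_subgroup_le (hψ : ψ.IsPrimitive) (H : Subgroup Rˣ) [Fintype H] (a : Rˣ) :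
    ‖∑ h : H, ψ (a * ((h : Rˣ) : R))‖ ≤ √(Fintype.card R) := by
  classical
  set S : R → ℂ := fun b => ∑ h : H, ψ (b * ((h : Rˣ) : R))
  have S_mul (b : R) (u : H) : S (b * ((u : Rˣ) : R)) = S b :=
    Fintype.sum_equiv (Equiv.mulLeft u) _ _ fun h => by simp [mul_assoc]
  have translate_injective : Function.Injective fun h : H => (a : R) * ((h : Rˣ) : R) :=
    fun x y hxy => Subtype.ext <| Units.ext <| a.isUnit.mul_left_cancel hxy
  have key : Fintype.card H * ‖S a‖ ^ 2 ≤ Fintype.card R * Fintype.card H :=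
    calc Fintype.card H * ‖S a‖ ^ 2
        = ∑ u : H, ‖S (a * ((u : Rˣ) : R))‖ ^ 2 := by simp [S_mul]
      _ = ∑ b ∈ univ.image fun u : H => (a : R) * ((u : Rˣ) : R), ‖S b‖ ^ 2 := by
          rw [sum_image fun x _ y _ h => translate_injective h]
      _ ≤ ∑ b, ‖S b‖ ^ 2 :=
          sum_le_sum_of_subset_of_nonneg (subset_univ _) fun _ _ _ => by positivity
      _ = Fintype.card R * Fintype.card H :=
          sum_norm_sq_sum_mul_eq hψ (Units.val_injective.comp Subtype.val_injective)
  have norm_sq_le : ‖S a‖ ^ 2 ≤ Fintype.card R := by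
    rw [mul_comm (Fintype.card R : ℝ)] at key
    exact le_of_mul_le_mul_left key (by exact_mod_cast Fintype.card_pos)
  exact Real.le_sqrt_of_sq_le norm_sq_le

end AddChar

/-- Gauss-sum bound (Lidl–Niederreiter Thm 8.78): for a nontrivial additive character `ψ`
of `F_q`, `g ∈ F_q^×` of multiplicative order `s` and `a ∈ F_q^×`,
`|Σ_{x=0}^{s-1} ψ(a·g^x)| ≤ √q`. -/
theorem stmt_1 {F : Type*} [Field F] [Fintype F] (ψ : AddChar F ℂ)
    (hψ : ∃ u : F, ψ u ≠ 1) (a g : Fˣ) (s : ℕ) (hs : orderOf g = s) :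
    ‖∑ x ∈ Finset.range s, ψ ((a : F) * (g : F) ^ x)‖ ≤
      Real.sqrt (Fintype.card F) := by
  classical
  have hprim : ψ.IsPrimitive := AddChar.IsPrimitive.of_ne_one fun h => by simp [h] at hψ
  subst hs
  simp only [← Units.val_pow_eq_pow_val]
  rw [(isOfFinOrder_of_finite g).sum_range_orderOf_eq_sum_zpowers fun h : Fˣ => ψ (a * (h : F))]
  exact AddChar.norm_sum_mul_subgroup_le hprim _ a
end

section
/- With the notation of the exponential polynomial f_b(x₁,x₂,x₃) = a₁g₁^{x₁} + a₂g₂^{x₂} + a₃g₃^{x₃} − b over F_q, define for each b ∈ F_q the error term Δ_b(r) = N_{f_b}(r) − s₁s₂r/q, where s_i is the order of g_i and N_{f_b}(r) counts solutions with x₁ ∈ {0,…,s₁−1}, x₂ ∈ {0,…,s₂−1}, x₃ ∈ {0,…,r−1}. Then Σ_{b ∈ F_q} |Δ_b(r)|² ≤ q² r. -/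
open Finset

/-- `Ncount a₁ a₂ a₃ g₁ g₂ g₃ s₁ s₂ r b` is the number of triples
`(x₁,x₂,x₃) ∈ {0,…,s₁-1} × {0,…,s₂-1} × {0,…,r-1}` with
`a₁g₁^{x₁} + a₂g₂^{x₂} + a₃g₃^{x₃} = b`. -/
def Ncount {F : Type*} [Field F] [Fintype F] [DecidableEq F]
    (a₁ a₂ a₃ g₁ g₂ g₃ : F) (s₁ s₂ r : ℕ) (b : F) : ℕ :=
  ((range s₁ ×ˢ range s₂ ×ˢ range r).filter
    (fun x => a₁ * g₁ ^ x.1 + a₂ * g₂ ^ x.2.1 + a₃ * g₃ ^ x.2.2 = b)).card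

/-!
Fix a primitive additive character `ψ` of `F` and write `T(c, g, n) = ∑_{x < n} ψ (c gˣ)`.
Detecting `f_b(x) = 0` by `ψ` gives `q N_b = ∑_μ S(μ) ψ(-μb)` with
`S(μ) = T(μa₁, g₁, s₁) T(μa₂, g₂, s₂) T(μa₃, g₃, r)`, and the term `μ = 0` is `s₁s₂r`, so
`q Δ_b = ∑_{μ ≠ 0} S(μ) ψ(-μb)` and Plancherel gives `q² ∑_b |Δ_b|² = q ∑_{μ ≠ 0} |S(μ)|²`.
Since `gⁱ` are distinct for `i < orderOf g`, Parseval gives `∑_c |T(c, g, n)|² = q n` for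
`n ≤ orderOf g`. A complete sum `T(c, g, orderOf g)` is constant on the orbit `c⟨g⟩`, which has
`orderOf g` points when `c ≠ 0`, so `|T(c, g, orderOf g)|² ≤ q`. Hence
`∑_{μ ≠ 0} |S(μ)|² ≤ q² ∑_μ |T(μa₃, g₃, r)|² = q³ r`.
-/

theorem Finset.sum_range_succ_eq_of_eq {M : Type*} [AddCancelCommMonoid M] (u : ℕ → M) (n : ℕ)
    (hu : u n = u 0) : ∑ x ∈ range n, u (x + 1) = ∑ x ∈ range n, u x := by
  apply add_right_cancel (b := u 0)
  rw [← sum_range_succ', sum_range_succ, hu]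

namespace AddChar

variable {R : Type*} [CommRing R] [Fintype R] [DecidableEq R] {ψ : AddChar R ℂ}

theorem sum_normSq_sum_mul_apply_mul (hψ : ψ.IsPrimitive) {ι : Type*} {s : Finset ι}
    {y : ι → R} (hy : Set.InjOn y s) (w : ι → ℂ) :
    ∑ c : R, Complex.normSq (∑ i ∈ s, w i * ψ (c * y i)) =
      Fintype.card R * ∑ i ∈ s, Complex.normSq (w i) := by
  have expand : ∀ c : R, (Complex.normSq (∑ i ∈ s, w i * ψ (c * y i)) : ℂ) =
      ∑ i ∈ s, ∑ j ∈ s, w i * starRingEnd ℂ (w j) * ψ (c * (y i - y j)) := by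
    intro c
    rw [← Complex.mul_conj, map_sum, sum_mul_sum]
    refine sum_congr rfl fun i _ => sum_congr rfl fun j _ => ?_
    rw [mul_sub, sub_eq_add_neg, map_add_eq_mul, map_neg_eq_conj, map_mul (starRingEnd ℂ)]
    ring
  have orth : ∀ i ∈ s, ∑ j ∈ s, w i * starRingEnd ℂ (w j) *
      ((if y i - y j = 0 then Fintype.card R else 0 : ℕ) : ℂ) =
      Fintype.card R * Complex.normSq (w i) := by
    intro i hi
    rw [sum_eq_single_of_mem i hi fun j hj hji => by
      rw [if_neg (sub_ne_zero.mpr fun h => hji (hy hj hi h.symm)), Nat.cast_zero, mul_zero]]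
    rw [sub_self, if_pos rfl, Complex.mul_conj]
    ring
  apply Complex.ofReal_injective
  push_cast
  simp_rw [expand]
  rw [sum_comm]
  simp_rw [sum_comm (s := univ), ← mul_sum, sum_mulShift _ hψ]
  rw [mul_sum]
  exact sum_congr rfl orth

theorem card_mul_card_filter_eq (hψ : ψ.IsPrimitive) {ι : Type*} (X : Finset ι) (f : ι → R)
    (b : R) :
    (Fintype.card R : ℂ) * #{x ∈ X | f x = b} =
      ∑ μ : R, (∑ x ∈ X, ψ (μ * f x)) * ψ (b * -μ) := by
  simp_rw [sum_mul, ← map_add_eq_mul, show ∀ μ x, μ * f x + b * -μ = μ * (f x - b) by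
    intros; ring]
  rw [sum_comm]
  simp_rw [sum_mulShift _ hψ, sub_eq_zero]
  rw [← Nat.cast_sum, ← sum_filter, sum_const, smul_eq_mul, Nat.cast_mul, mul_comm]

end AddChar

open AddChar

noncomputable def expSum {R : Type*} [CommRing R] (ψ : AddChar R ℂ) (c g : R) (n : ℕ) : ℂ :=
  ∑ x ∈ range n, ψ (c * g ^ x)

section expSum

variable {R : Type*} [CommRing R] {ψ : AddChar R ℂ}

theorem sum_addChar_mul_eq_expSum_mul_expSum_mul (a₁ a₂ a₃ g₁ g₂ g₃ : R) (s₁ s₂ r : ℕ)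
    (μ : R) :
    ∑ x ∈ range s₁ ×ˢ range s₂ ×ˢ range r,
        ψ (μ * (a₁ * g₁ ^ x.1 + a₂ * g₂ ^ x.2.1 + a₃ * g₃ ^ x.2.2)) =
      expSum ψ (μ * a₁) g₁ s₁ * expSum ψ (μ * a₂) g₂ s₂ * expSum ψ (μ * a₃) g₃ r := by
  simp only [expSum, sum_product, mul_add, map_add_eq_mul, mul_assoc]
  rw [sum_mul_sum]
  simp_rw [sum_mul, mul_sum]

theorem expSum_mul_self_orderOf (c g : R) :
    expSum ψ (c * g) g (orderOf g) = expSum ψ c g (orderOf g) := by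
  simp only [expSum, mul_assoc, ← pow_succ']
  exact sum_range_succ_eq_of_eq (fun x => ψ (c * g ^ x)) _ (by simp [pow_orderOf_eq_one])

theorem expSum_mul_pow_orderOf (c g : R) (k : ℕ) :
    expSum ψ (c * g ^ k) g (orderOf g) = expSum ψ c g (orderOf g) := by
  induction k with
  | zero => simp
  | succ k ih => rw [pow_succ, ← mul_assoc, expSum_mul_self_orderOf, ih]

theorem sum_normSq_expSum [Fintype R] [DecidableEq R] (hψ : ψ.IsPrimitive) {g : R} {n : ℕ}
    (hn : n ≤ orderOf g) :
    ∑ c : R, Complex.normSq (expSum ψ c g n) = Fintype.card R * n := by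
  have hinj : Set.InjOn (g ^ ·) (range n : Set ℕ) := fun x hx y hy =>
    pow_injOn_Iio_orderOf (Set.mem_Iio.mpr (lt_of_lt_of_le (mem_range.mp hx) hn))
      (Set.mem_Iio.mpr (lt_of_lt_of_le (mem_range.mp hy) hn))
  simpa [expSum] using sum_normSq_sum_mul_apply_mul hψ hinj 1

end expSum

section Field

variable {F : Type*} [Field F] [Fintype F] [DecidableEq F] {ψ : AddChar F ℂ}

theorem normSq_expSum_orderOf_le (hψ : ψ.IsPrimitive) {c : F} (hc : c ≠ 0) (g : F) :
    Complex.normSq (expSum ψ c g (orderOf g)) ≤ Fintype.card F := by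
  set s := orderOf g
  rcases Nat.eq_zero_or_pos s with hs | hs
  · simp [expSum, hs]
  have hinj : Set.InjOn (fun k => c * g ^ k) (range s : Set ℕ) := fun k hk l hl h =>
    pow_injOn_Iio_orderOf (by simpa using hk) (by simpa using hl) (mul_left_cancel₀ hc h)
  have orbit : (s : ℝ) * Complex.normSq (expSum ψ c g s) =
      ∑ c' ∈ (range s).image (fun k => c * g ^ k), Complex.normSq (expSum ψ c' g s) := by
    simp [sum_image hinj, expSum_mul_pow_orderOf, s]
  refine le_of_mul_le_mul_left ?_ (Nat.cast_pos.mpr hs)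
  calc (s : ℝ) * Complex.normSq (expSum ψ c g s)
      ≤ ∑ c' : F, Complex.normSq (expSum ψ c' g s) :=
        orbit ▸ sum_le_univ_sum_of_nonneg fun _ => Complex.normSq_nonneg _
    _ = s * Fintype.card F := by rw [sum_normSq_expSum hψ le_rfl, mul_comm]

theorem card_mul_Ncount_sub (hψ : ψ.IsPrimitive) (a₁ a₂ a₃ g₁ g₂ g₃ : F) (s₁ s₂ r : ℕ)
    (b : F) :
    (Fintype.card F : ℂ) * Ncount a₁ a₂ a₃ g₁ g₂ g₃ s₁ s₂ r b - s₁ * s₂ * r =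
      ∑ μ ∈ univ.erase 0, expSum ψ (μ * a₁) g₁ s₁ * expSum ψ (μ * a₂) g₂ s₂ *
        expSum ψ (μ * a₃) g₃ r * ψ (b * -μ) := by
  rw [Ncount, card_mul_card_filter_eq hψ, sub_eq_iff_eq_add,
    ← sum_erase_add univ _ (mem_univ 0)]
  simp [sum_addChar_mul_eq_expSum_mul_expSum_mul, expSum]
  ring

theorem sum_normSq_expSum_mul_le (hψ : ψ.IsPrimitive) {a₁ a₂ a₃ : F} (ha₁ : a₁ ≠ 0)
    (ha₂ : a₂ ≠ 0) (ha₃ : a₃ ≠ 0) (g₁ g₂ g₃ : F) {r : ℕ} (hr : r ≤ orderOf g₃) :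
    ∑ μ ∈ univ.erase 0, Complex.normSq (expSum ψ (μ * a₁) g₁ (orderOf g₁) *
        expSum ψ (μ * a₂) g₂ (orderOf g₂) * expSum ψ (μ * a₃) g₃ r) ≤
      Fintype.card F ^ 3 * r := by
  set q : ℝ := (Fintype.card F : ℝ)
  calc _ ≤ ∑ μ ∈ univ.erase 0, q * q * Complex.normSq (expSum ψ (μ * a₃) g₃ r) := by
        refine sum_le_sum fun μ hμ => ?_
        have hμ : μ ≠ 0 := ne_of_mem_erase hμ
        have h₁ := normSq_expSum_orderOf_le hψ (mul_ne_zero hμ ha₁) g₁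
        have h₂ := normSq_expSum_orderOf_le hψ (mul_ne_zero hμ ha₂) g₂
        simp only [Complex.normSq_mul]
        gcongr <;> exact Complex.normSq_nonneg _
    _ ≤ q * q * ∑ μ : F, Complex.normSq (expSum ψ (μ * a₃) g₃ r) := by
        rw [← mul_sum]
        exact mul_le_mul_of_nonneg_left
          (sum_le_univ_sum_of_nonneg fun _ => Complex.normSq_nonneg _) (by positivity)
    _ = q ^ 3 * r := by
        rw [Fintype.sum_equiv (Equiv.mulRight₀ a₃ ha₃)
            (fun μ => Complex.normSq (expSum ψ (μ * a₃) g₃ r))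
            (fun c => Complex.normSq (expSum ψ c g₃ r)) fun _ => rfl,
          sum_normSq_expSum hψ hr]
        ring

theorem sq_card_mul_sq_abs_Ncount_sub (hψ : ψ.IsPrimitive) (a₁ a₂ a₃ g₁ g₂ g₃ : F)
    (s₁ s₂ r : ℕ) (b : F) :
    (Fintype.card F : ℝ) ^ 2 * |(Ncount a₁ a₂ a₃ g₁ g₂ g₃ s₁ s₂ r b : ℝ) -
        s₁ * s₂ * r / Fintype.card F| ^ 2 =
      Complex.normSq (∑ μ ∈ univ.erase 0, expSum ψ (μ * a₁) g₁ s₁ * expSum ψ (μ * a₂) g₂ s₂ *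
        expSum ψ (μ * a₃) g₃ r * ψ (b * -μ)) := by
  rw [← card_mul_Ncount_sub hψ, sq_abs]
  set N := Ncount a₁ a₂ a₃ g₁ g₂ g₃ s₁ s₂ r b
  set q : ℝ := (Fintype.card F : ℝ)
  have hreal : (Fintype.card F : ℂ) * N - s₁ * s₂ * r = ((q * (N - s₁ * s₂ * r / q) : ℝ) : ℂ) := by
    push_cast [q]
    field_simp
  rw [hreal, Complex.normSq_ofReal]
  ring

theorem sum_sq_abs_Ncount_sub_le {a₁ a₂ a₃ : F} (ha₁ : a₁ ≠ 0) (ha₂ : a₂ ≠ 0) (ha₃ : a₃ ≠ 0)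
    (g₁ g₂ g₃ : F) {r : ℕ} (hr : r ≤ orderOf g₃) :
    ∑ b : F, |(Ncount a₁ a₂ a₃ g₁ g₂ g₃ (orderOf g₁) (orderOf g₂) r b : ℝ) -
        (orderOf g₁ : ℝ) * (orderOf g₂ : ℝ) * r / (Fintype.card F : ℝ)| ^ 2 ≤
      (Fintype.card F : ℝ) ^ 2 * r := by
  have hψ := FiniteField.primitiveChar_to_Complex_isPrimitive F
  set ψ := FiniteField.primitiveChar_to_Complex F
  set S : F → ℂ := fun μ => expSum ψ (μ * a₁) g₁ (orderOf g₁) *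
    expSum ψ (μ * a₂) g₂ (orderOf g₂) * expSum ψ (μ * a₃) g₃ r
  set q : ℝ := (Fintype.card F : ℝ)
  refine le_of_mul_le_mul_left ?_ (pow_pos (Nat.cast_pos.mpr Fintype.card_pos : 0 < q) 2)
  calc _ = ∑ b : F, Complex.normSq (∑ μ ∈ univ.erase 0, S μ * ψ (b * -μ)) := by
        rw [mul_sum]
        exact sum_congr rfl fun b _ => sq_card_mul_sq_abs_Ncount_sub hψ a₁ a₂ a₃ g₁ g₂ g₃ _ _ r b
    _ = q * ∑ μ ∈ univ.erase 0, Complex.normSq (S μ) :=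
        sum_normSq_sum_mul_apply_mul hψ neg_injective.injOn S
    _ ≤ q * (q ^ 3 * r) := by
        gcongr
        exact sum_normSq_expSum_mul_le hψ ha₁ ha₂ ha₃ g₁ g₂ g₃ hr
    _ = q ^ 2 * (q ^ 2 * r) := by ring

end Field

theorem stmt_3_general {F : Type*} [Field F] [Fintype F] [DecidableEq F]
    (a₁ a₂ a₃ g₁ g₂ g₃ : Fˣ) (r : ℕ) (hr3 : r ≤ orderOf g₃) :
    ∑ b : F, |(Ncount (a₁ : F) a₂ a₃ g₁ g₂ g₃ (orderOf g₁) (orderOf g₂) r b : ℝ) -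
        (orderOf g₁ : ℝ) * (orderOf g₂ : ℝ) * r / (Fintype.card F : ℝ)| ^ 2 ≤
      (Fintype.card F : ℝ) ^ 2 * r := by
  rw [← orderOf_units] at hr3
  simp only [← orderOf_units (y := g₁), ← orderOf_units (y := g₂)]
  exact sum_sq_abs_Ncount_sub_le a₁.ne_zero a₂.ne_zero a₃.ne_zero _ _ _ hr3

/-- Second moment bound: with `Δ_b(r) = N_{f_b}(r) − s₁s₂r/q`, one has
`Σ_{b ∈ F_q} |Δ_b(r)|² ≤ q²·r`. -/
theorem stmt_3 {F : Type*} [Field F] [Fintype F] [DecidableEq F]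
    (a₁ a₂ a₃ g₁ g₂ g₃ : Fˣ) (r : ℕ) (hr : 1 ≤ r) (hr3 : r ≤ orderOf g₃) :
    ∑ b : F, |(Ncount (a₁ : F) a₂ a₃ g₁ g₂ g₃ (orderOf g₁) (orderOf g₂) r b : ℝ) -
        (orderOf g₁ : ℝ) * (orderOf g₂ : ℝ) * r / (Fintype.card F : ℝ)| ^ 2 ≤
      (Fintype.card F : ℝ) ^ 2 * r :=
  stmt_3_general a₁ a₂ a₃ g₁ g₂ g₃ r hr3
end
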